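/- Let B ⊆ P be a principal coalgebra C-extension, π: C → D a coalgebra map, ē = π(e), A = P^{co D}_ē, Ā = {a ∈ P | (π ⊗ id)∘λ(a) = ē ⊗ a} where λ(p) = ψ⁻¹(p ⊗ e). Then the canonical Galois map restricts to an isomorphism Ā ⊗_B A ≅ {w ∈ P ⊗ X | Λ(w) = ē ⊗ w}, where Λ = (π ⊗ id ⊗ id)∘(ψ⁻¹ ⊗ id)∘(id ⊗ Δ) is the left D-coaction on P ⊗ X and X = C^{co D}_ē. -/

import Mathlib

/-!
Let `σ` be the equivariant section and `E (p ⊗ q) = p σ(q)` on `P ⊗ P`. Since `σ` is left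
`B`-linear, `E` kills the balancing relations `galRel = ker can`; since `σ` lands in `B ⊗ P` and
splits the multiplication, `u - E u` is always such a relation. Hence `can ∘ E = can` and
`E ∘ E = E`.

Let `w ∈ P ⊗ X` with `Λ w = ē ⊗ w`, and `u = E u₀` where `can u₀ = w`. Write `δ` for the right
`D`-coinvariance defects `(id ⊗ π) ρ - (· ⊗ ē)` on `P` and `(id ⊗ π) Δ - (· ⊗ ē)` on `C`, and
`μ = (π ⊗ id) λ - ē ⊗ ·` for the left one on `P`. Colinearity of `σ` and coassociativity of `ρ` give
`(id ⊗ δ) ∘ E = (E ⊗ id) ∘ (id ⊗ δ)` and `(id ⊗ δ) ∘ can = (can ⊗ id) ∘ (id ⊗ δ)`; as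
`(id ⊗ δ) w = 0`, the tensor `(id ⊗ δ) u₀` lies in `ker can ⊗ D`, so `(id ⊗ δ) u = 0`, i.e.
`u ∈ P ⊗ A`. The entwining gives `Λ ∘ can - ē ⊗ can = (id ⊗ can) ∘ (μ ⊗ id)`, and
`μ (p b) = μ(p) b` for `b ∈ B` gives `(μ ⊗ id) ∘ E = (id ⊗ E) ∘ (μ ⊗ id)`; the same argument
yields `(μ ⊗ id) u = 0`, i.e. `u ∈ Ā ⊗ P`. Over a field `(Ā ⊗ P) ∩ (P ⊗ A) = Ā ⊗ A`.

For the kernel, `σ` maps `A` into `B ⊗ A`, so for `w ∈ Ā ⊗ A` the difference `w - E w` is a sum of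
relations `p b ⊗ a - p ⊗ b a` with `p ∈ Ā` and `a ∈ A`, while `E w = 0` when `can w = 0`.
-/

open TensorProduct

variable (k C D P : Type) [Field k] [AddCommGroup C] [Module k C] [Coalgebra k C]
  [AddCommGroup D] [Module k D] [Coalgebra k D]
  [Ring P] [Algebra k P]

/-- The canonical Galois map `P ⊗ P → P ⊗ C`, `p ⊗ q ↦ p·ρ(q)`. -/
noncomputable def canMap (ρ : P →ₗ[k] P ⊗[k] C) : P ⊗[k] P →ₗ[k] P ⊗[k] C :=
  LinearMap.rTensor C (LinearMap.mul' k P) ∘ₗ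
    (TensorProduct.assoc k P P C).symm.toLinearMap ∘ₗ LinearMap.lTensor P ρ

/-- The coinvariants `B = P^{co C}`. -/
def coinv (ρ : P →ₗ[k] P ⊗[k] C) : Set P :=
  {b : P | ∀ p : P, ρ (b * p) = LinearMap.rTensor C (LinearMap.mulLeft k b) (ρ p)}

/-- The kernel of `P ⊗ₖ P → P ⊗_B P`. -/
def galRel (ρ : P →ₗ[k] P ⊗[k] C) : Submodule k (P ⊗[k] P) :=
  Submodule.span k
    {w : P ⊗[k] P | ∃ p q b : P, b ∈ coinv k C P ρ ∧
      w = (p * b) ⊗ₜ[k] q - p ⊗ₜ[k] (b * q)}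

/-- The `ē`-coinvariants `X ⊆ C`. -/
noncomputable def Xsub (π : C →ₗ[k] D) (eb : D) : Submodule k C :=
  LinearMap.ker
    ((LinearMap.lTensor C π ∘ₗ Coalgebra.comul (R := k) (A := C)) -
      (TensorProduct.mk k C D).flip eb)

/-- The `ē`-coinvariants `A ⊆ P` (for the right `D`-coaction). -/
noncomputable def Asub (ρ : P →ₗ[k] P ⊗[k] C) (π : C →ₗ[k] D) (eb : D) :
    Submodule k P :=
  LinearMap.ker ((LinearMap.lTensor P π ∘ₗ ρ) - (TensorProduct.mk k P D).flip eb)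

/-- The left `ē`-coinvariants `Ā = {a | (π ⊗ id)∘λ(a) = ē ⊗ a}`, where
`λ(p) = ψ⁻¹(p ⊗ e)`. -/
def Abar (ψ : C ⊗[k] P ≃ₗ[k] P ⊗[k] C) (π : C →ₗ[k] D) (e : C) : Set P :=
  {a : P | LinearMap.rTensor P π (ψ.symm (a ⊗ₜ[k] e)) = (π e) ⊗ₜ[k] a}

/-- The map `Λ = (π ⊗ id ⊗ id)∘(ψ⁻¹ ⊗ id)∘(id ⊗ Δ) : P ⊗ C → D ⊗ (P ⊗ C)`. -/
noncomputable def ΛMap (ψ : C ⊗[k] P ≃ₗ[k] P ⊗[k] C) (π : C →ₗ[k] D) :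
    P ⊗[k] C →ₗ[k] D ⊗[k] (P ⊗[k] C) :=
  (TensorProduct.assoc k D P C).toLinearMap ∘ₗ
    LinearMap.rTensor C (LinearMap.rTensor P π) ∘ₗ
    LinearMap.rTensor C ψ.symm.toLinearMap ∘ₗ
    (TensorProduct.assoc k P C C).symm.toLinearMap ∘ₗ
    LinearMap.lTensor P (Coalgebra.comul (R := k) (A := C))

/-- The kernel of `Ā ⊗ₖ A → Ā ⊗_B A`. -/
noncomputable def galRelAbarA (ρ : P →ₗ[k] P ⊗[k] C) (ψ : C ⊗[k] P ≃ₗ[k] P ⊗[k] C)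
    (π : C →ₗ[k] D) (e : C) : Submodule k (P ⊗[k] P) :=
  Submodule.span k
    {w : P ⊗[k] P | ∃ p ∈ Abar k C D P ψ π e, ∃ b ∈ coinv k C P ρ,
      ∃ a ∈ Asub k C D P ρ π (π e), w = (p * b) ⊗ₜ[k] a - p ⊗ₜ[k] (b * a)}


open LinearMap

section TensorNaturality

variable {R M M' N N' Q T : Type*} [CommSemiring R]
  [AddCommMonoid M] [Module R M] [AddCommMonoid M'] [Module R M']
  [AddCommMonoid N] [Module R N] [AddCommMonoid N'] [Module R N']
  [AddCommMonoid Q] [Module R Q] [AddCommMonoid T] [Module R T]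

theorem lTensor_rTensor_comm_apply (f : M →ₗ[R] M') (g : N →ₗ[R] N') (x : M ⊗[R] N) :
    lTensor M' g (rTensor N f x) = rTensor N' f (lTensor M g x) := by
  rw [← comp_apply, lTensor_comp_rTensor, ← rTensor_comp_lTensor, comp_apply]

theorem rTensor_assoc_symm_tmul (g : M ⊗[R] N →ₗ[R] T) (m : M) (w : N ⊗[R] Q) :
    rTensor Q g ((TensorProduct.assoc R M N Q).symm (m ⊗ₜ w)) =
      rTensor Q (g ∘ₗ TensorProduct.mk R M N m) w := by
  induction w using TensorProduct.induction_on with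
  | zero => simp
  | tmul n q => simp
  | add x y hx hy => rw [TensorProduct.tmul_add, map_add, map_add, hx, hy, map_add]

theorem rTensor_tensor_assoc_apply (g : M →ₗ[R] M') (w : (M ⊗[R] N) ⊗[R] Q) :
    rTensor (N ⊗[R] Q) g (TensorProduct.assoc R M N Q w) =
      TensorProduct.assoc R M' N Q (rTensor Q (rTensor N g) w) := by
  simp [rTensor_tensor]

theorem lTensor_tensor_assoc_symm_apply (h : N →ₗ[R] T) (w : M ⊗[R] (Q ⊗[R] N)) :
    lTensor (M ⊗[R] Q) h ((TensorProduct.assoc R M Q N).symm w) =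
      (TensorProduct.assoc R M Q T).symm (lTensor M (lTensor Q h) w) := by
  simp [lTensor_tensor]

theorem lTensor_flip_mk_apply (w : M ⊗[R] N) (t : T) :
    lTensor M ((TensorProduct.mk R N T).flip t) w = TensorProduct.assoc R M N T (w ⊗ₜ t) := by
  induction w using TensorProduct.induction_on with
  | zero => simp
  | tmul m n => simp
  | add a b ha hb => rw [map_add, TensorProduct.add_tmul, map_add, ha, hb]

theorem assoc_rTensor_mk_apply (m : M) (x : N ⊗[R] Q) :
    TensorProduct.assoc R M N Q (rTensor Q (TensorProduct.mk R M N m) x) = m ⊗ₜ x := by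
  induction x using TensorProduct.induction_on with
  | zero => simp
  | tmul n q => simp
  | add a b ha hb => rw [map_add, map_add, ha, hb, TensorProduct.tmul_add]

end TensorNaturality

section Flat

variable {R M M' N : Type*} [CommRing R] [AddCommGroup M] [Module R M]
  [AddCommGroup M'] [Module R M'] [AddCommGroup N] [Module R N]

theorem ker_lTensor_eq_range_lTensor_subtype [Module.Flat R M] (f : M' →ₗ[R] N) :
    ker (lTensor M f) = range (lTensor M (ker f).subtype) :=
  (Module.Flat.lTensor_exact M f.exact_subtype_ker_map).linearMap_ker_eq

theorem ker_rTensor_eq_range_rTensor_subtype [Module.Flat R M] (f : M' →ₗ[R] N) :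
    ker (rTensor M f) = range (rTensor M (ker f).subtype) :=
  (Module.Flat.rTensor_exact M f.exact_subtype_ker_map).linearMap_ker_eq

theorem ker_lTensor_mono [Module.Flat R M] {N' : Type*} [AddCommGroup N'] [Module R N']
    {f : M' →ₗ[R] N} {g : M' →ₗ[R] N'} (h : ker f ≤ ker g) :
    ker (lTensor M f) ≤ ker (lTensor M g) := by
  rw [ker_lTensor_eq_range_lTensor_subtype, range_le_ker_iff, ← lTensor_comp,
    le_ker_iff_comp_subtype_eq_zero.mp h, lTensor_zero]

theorem ker_rTensor_mono [Module.Flat R M] {N' : Type*} [AddCommGroup N'] [Module R N']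
    {f : M' →ₗ[R] N} {g : M' →ₗ[R] N'} (h : ker f ≤ ker g) :
    ker (rTensor M f) ≤ ker (rTensor M g) := by
  rw [ker_rTensor_eq_range_rTensor_subtype, range_le_ker_iff, ← rTensor_comp,
    le_ker_iff_comp_subtype_eq_zero.mp h, rTensor_zero]

theorem mem_range_mapIncl_of_lTensor_eq_zero {U : Submodule R M} [Module.Flat R U]
    [Module.Flat R N] {g : M' →ₗ[R] N} {x : M ⊗[R] M'}
    (hx : x ∈ range (rTensor M' U.subtype)) (hg : lTensor M g x = 0) :
    x ∈ range (TensorProduct.mapIncl U (ker g)) := by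
  obtain ⟨y, rfl⟩ := hx
  have hy : lTensor U g y = 0 := by
    apply Module.Flat.rTensor_preserves_injective_linearMap _ U.injective_subtype
    rw [map_zero, ← lTensor_rTensor_comm_apply, hg]
  rw [← mem_ker, ker_lTensor_eq_range_lTensor_subtype] at hy
  obtain ⟨z, rfl⟩ := hy
  exact ⟨z, (LinearMap.congr_fun
    (rTensor_comp_lTensor (f := U.subtype) (g := (ker g).subtype)) z).symm⟩

end Flat

section LeftExtension

variable {R P : Type*} [CommSemiring R] [Semiring P] [Algebra R P]
  {M V Y : Type*} [AddCommMonoid M] [Module R M] [AddCommMonoid V] [Module R V]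
  [AddCommMonoid Y] [Module R Y]

noncomputable def leftExtension (τ : V →ₗ[R] P ⊗[R] Y) : P ⊗[R] V →ₗ[R] P ⊗[R] Y :=
  rTensor Y (mul' R P) ∘ₗ (TensorProduct.assoc R P P Y).symm.toLinearMap ∘ₗ lTensor P τ

theorem leftExtension_comp_mk (τ : V →ₗ[R] P ⊗[R] Y) (p : P) :
    leftExtension τ ∘ₗ TensorProduct.mk R P V p = rTensor Y (mulLeft R p) ∘ₗ τ := by
  ext v
  simp only [leftExtension, coe_comp, LinearEquiv.coe_coe, Function.comp_apply,
    TensorProduct.mk_apply, lTensor_tmul, rTensor_assoc_symm_tmul]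
  congr 2

theorem leftExtension_tmul (τ : V →ₗ[R] P ⊗[R] Y) (p : P) (v : V) :
    leftExtension τ (p ⊗ₜ v) = rTensor Y (mulLeft R p) (τ v) :=
  LinearMap.congr_fun (leftExtension_comp_mk τ p) v

theorem leftExtension_rTensor_mulLeft (τ : V →ₗ[R] P ⊗[R] Y) (p : P) (x : P ⊗[R] V) :
    leftExtension τ (rTensor V (mulLeft R p) x) = rTensor Y (mulLeft R p) (leftExtension τ x) := by
  induction x using TensorProduct.induction_on with
  | zero => simp
  | tmul q v => rw [rTensor_tmul, mulLeft_apply, leftExtension_tmul, leftExtension_tmul,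
      mulLeft_mul, rTensor_comp_apply]
  | add x y hx hy => rw [map_add, map_add, hx, hy, map_add, map_add]

theorem lTensor_leftExtension_apply {N : Type*} [AddCommMonoid N] [Module R N]
    (τ : V →ₗ[R] P ⊗[R] Y) (f : V →ₗ[R] V ⊗[R] N) (g : Y →ₗ[R] Y ⊗[R] N)
    (h : ∀ v, rTensor N τ (f v) = (TensorProduct.assoc R P Y N).symm (lTensor P g (τ v)))
    (u : P ⊗[R] V) :
    lTensor P g (leftExtension τ u) = TensorProduct.assoc R P Y N
      (rTensor N (leftExtension τ) ((TensorProduct.assoc R P V N).symm (lTensor P f u))) := by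
  induction u using TensorProduct.induction_on with
  | zero => simp
  | tmul p v =>
    rw [leftExtension_tmul, lTensor_rTensor_comm_apply, (LinearEquiv.symm_apply_eq _).mp (h v).symm,
      lTensor_tmul, rTensor_assoc_symm_tmul, rTensor_tensor_assoc_apply, ← rTensor_comp_apply,
      leftExtension_comp_mk, rTensor_comp]
  | add x y hx hy => simp only [map_add, hx, hy]

noncomputable def tensorMulRight : M ⊗[R] P →ₗ[R] P →ₗ[R] M ⊗[R] P :=
  (lTensorHom (R := R) M ∘ₗ (LinearMap.mul R P).flip).flip

theorem tensorMulRight_apply (ν : M ⊗[R] P) (b : P) :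
    tensorMulRight ν b = lTensor M (mulRight R b) ν := rfl

theorem lTensor_leftExtension_assoc_tmul (τ : V →ₗ[R] P ⊗[R] Y) (ν : M ⊗[R] P) (v : V) :
    lTensor M (leftExtension τ) (TensorProduct.assoc R M P V (ν ⊗ₜ v)) =
      TensorProduct.assoc R M P Y (rTensor Y (tensorMulRight ν) (τ v)) := by
  induction ν using TensorProduct.induction_on with
  | zero => simp
  | tmul m r =>
    have h : tensorMulRight (m ⊗ₜ r) = TensorProduct.mk R M P m ∘ₗ mulLeft R r := by
      ext; simp [tensorMulRight_apply]
    rw [TensorProduct.assoc_tmul, lTensor_tmul, leftExtension_tmul, h, rTensor_comp_apply,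
      assoc_rTensor_mk_apply]
  | add x y hx hy => rw [TensorProduct.add_tmul, map_add, map_add, hx, hy, map_add, rTensor_add,
      LinearMap.add_apply, map_add]

end LeftExtension

section CoinvDefect

variable {R C D : Type*} [CommRing R] [AddCommGroup C] [Module R C] [AddCommGroup D] [Module R D]

noncomputable def rightCoinvDefect {V : Type*} [AddCommGroup V] [Module R V]
    (δ : V →ₗ[R] V ⊗[R] C) (π : C →ₗ[R] D) (d : D) : V →ₗ[R] V ⊗[R] D :=
  lTensor V π ∘ₗ δ - (TensorProduct.mk R V D).flip d

theorem rTensor_rightCoinvDefect {V W X : Type*} [AddCommGroup V] [Module R V]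
    [AddCommGroup W] [Module R W] [AddCommGroup X] [Module R X]
    {δV : V →ₗ[R] V ⊗[R] C} {δW : W →ₗ[R] W ⊗[R] C} {φ : V →ₗ[R] X ⊗[R] W}
    (h : ∀ v, rTensor C φ (δV v) = (TensorProduct.assoc R X W C).symm (lTensor X δW (φ v)))
    (π : C →ₗ[R] D) (d : D) (v : V) :
    rTensor D φ (rightCoinvDefect δV π d v) =
      (TensorProduct.assoc R X W D).symm (lTensor X (rightCoinvDefect δW π d) (φ v)) := by
  simp only [rightCoinvDefect, LinearMap.sub_apply, LinearMap.comp_apply, map_sub, lTensor_sub]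
  rw [← lTensor_rTensor_comm_apply, h, lTensor_tensor_assoc_symm_apply, ← lTensor_comp_apply,
    flip_apply, TensorProduct.mk_apply, rTensor_tmul, lTensor_flip_mk_apply,
    LinearEquiv.symm_apply_apply]

end CoinvDefect

section GaloisMap

variable {k C P : Type} [Field k] [AddCommGroup C] [Module k C] [Ring P] [Algebra k P]
  {ρ : P →ₗ[k] P ⊗[k] C}

theorem canMap_eq_leftExtension (ρ : P →ₗ[k] P ⊗[k] C) : canMap k C P ρ = leftExtension ρ := rfl

theorem canMap_tmul (ρ : P →ₗ[k] P ⊗[k] C) (p q : P) :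
    canMap k C P ρ (p ⊗ₜ q) = rTensor C (mulLeft k p) (ρ q) :=
  leftExtension_tmul ρ p q

theorem galRel_le_ker_leftExtension {Y : Type*} [AddCommGroup Y] [Module k Y]
    {τ : P →ₗ[k] P ⊗[k] Y}
    (hτ : ∀ b ∈ coinv k C P ρ, ∀ p, τ (b * p) = rTensor Y (mulLeft k b) (τ p)) :
    galRel k C P ρ ≤ ker (leftExtension τ) := by
  rw [galRel, Submodule.span_le]
  rintro _ ⟨p, q, b, hb, rfl⟩
  rw [SetLike.mem_coe, mem_ker, map_sub, leftExtension_tmul, leftExtension_tmul, hτ b hb,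
    mulLeft_mul, rTensor_comp_apply, sub_self]

theorem galRel_le_ker_canMap (ρ : P →ₗ[k] P ⊗[k] C) : galRel k C P ρ ≤ ker (canMap k C P ρ) :=
  galRel_le_ker_leftExtension fun _ hb => hb

def coinvSubmodule (ρ : P →ₗ[k] P ⊗[k] C) : Submodule k P where
  carrier := coinv k C P ρ
  add_mem' {a b} ha hb p := by
    rw [add_mul, map_add, ha p, hb p, ← LinearMap.add_apply, ← rTensor_add]
    congr 2
    ext
    simp [add_mul]
  zero_mem' p := by simp
  smul_mem' c b hb p := by
    rw [smul_mul_assoc, map_smul, hb p, ← LinearMap.smul_apply, ← rTensor_smul]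
    congr 2
    ext
    simp

theorem mem_range_rTensor_coinvSubmodule_subtype {x : P ⊗[k] P}
    (hx : x ∈ Submodule.span k {w | ∃ b ∈ coinv k C P ρ, ∃ q : P, w = b ⊗ₜ[k] q}) :
    x ∈ range (rTensor P (coinvSubmodule ρ).subtype) := by
  refine Submodule.span_le.mpr ?_ hx
  rintro _ ⟨b, hb, q, rfl⟩
  exact ⟨(⟨b, hb⟩ : coinvSubmodule ρ) ⊗ₜ q, rfl⟩

theorem coaction_eq_tmul_of_mem_coinv {e : C} (h1 : ρ 1 = 1 ⊗ₜ e) {b : P}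
    (hb : b ∈ coinv k C P ρ) : ρ b = b ⊗ₜ e := by
  simpa [h1] using hb 1

theorem assoc_rTensor_leftExtension {M Y : Type*} [AddCommGroup M] [Module k M]
    [AddCommGroup Y] [Module k Y] (f : P →ₗ[k] M ⊗[k] P) (τ : P →ₗ[k] P ⊗[k] Y)
    (hf : ∀ b ∈ coinv k C P ρ, ∀ p, f (p * b) = lTensor M (mulRight k b) (f p))
    (hτ : ∀ q, τ q ∈ range (rTensor Y (coinvSubmodule ρ).subtype)) (u : P ⊗[k] P) :
    TensorProduct.assoc k M P Y (rTensor Y f (leftExtension τ u)) =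
      lTensor M (leftExtension τ) (TensorProduct.assoc k M P P (rTensor P f u)) := by
  induction u using TensorProduct.induction_on with
  | zero => simp
  | tmul p q =>
    obtain ⟨y, hy⟩ := hτ q
    have h : (f ∘ₗ mulLeft k p) ∘ₗ (coinvSubmodule ρ).subtype =
        tensorMulRight (f p) ∘ₗ (coinvSubmodule ρ).subtype :=
      LinearMap.ext fun b => hf b b.2 p
    rw [leftExtension_tmul, rTensor_tmul, lTensor_leftExtension_assoc_tmul, ← hy,
      ← rTensor_comp_apply, ← rTensor_comp_apply, ← rTensor_comp_apply, h, rTensor_comp_apply]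
  | add x y hx hy => simp only [map_add, hx, hy]

end GaloisMap

section EquivariantSection

variable {k C P : Type} [Field k] [AddCommGroup C] [Module k C] [Ring P] [Algebra k P]
  {ρ : P →ₗ[k] P ⊗[k] C} {σ : P →ₗ[k] P ⊗[k] P}

/-- A left `B`-linear, right `C`-colinear section of the multiplication `B ⊗ P → P`: the data
behind `C`-equivariant projectivity of `P` over `B`. -/
structure IsEquivariantSection (ρ : P →ₗ[k] P ⊗[k] C) (σ : P →ₗ[k] P ⊗[k] P) : Prop where
  mul'_apply : ∀ p : P, mul' k P (σ p) = p
  mem_span : ∀ p : P, σ p ∈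
    Submodule.span k {w : P ⊗[k] P | ∃ b ∈ coinv k C P ρ, ∃ q : P, w = b ⊗ₜ[k] q}
  map_coinv_mul : ∀ b ∈ coinv k C P ρ, ∀ p : P, σ (b * p) = rTensor P (mulLeft k b) (σ p)
  rTensor_coaction : ∀ p : P,
    rTensor C σ (ρ p) = (TensorProduct.assoc k P P C).symm (lTensor P ρ (σ p))

theorem IsEquivariantSection.mem_range (hσ : IsEquivariantSection ρ σ) (p : P) :
    σ p ∈ range (rTensor P (coinvSubmodule ρ).subtype) :=
  mem_range_rTensor_coinvSubmodule_subtype (hσ.mem_span p)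

theorem tmul_mem_comap_sub_leftExtension {W : Type*} [AddCommGroup W] [Module k W]
    (ι : W →ₗ[k] P) {S : Submodule k (P ⊗[k] P)} {p a : P}
    (hR : ∀ b ∈ coinv k C P ρ, ∀ w, (p * b) ⊗ₜ ι w - p ⊗ₜ (b * ι w) ∈ S)
    (hσ : σ a ∈ range (TensorProduct.map (coinvSubmodule ρ).subtype ι))
    (hmul : mul' k P (σ a) = a) :
    p ⊗ₜ a ∈ S.comap (LinearMap.id - leftExtension σ) := by
  have key : ∀ z, (TensorProduct.mk k P P p ∘ₗ mul' k P - rTensor P (mulLeft k p))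
      (TensorProduct.map (coinvSubmodule ρ).subtype ι z) ∈ S := by
    intro z
    induction z using TensorProduct.induction_on with
    | zero => simp
    | tmul b w => simpa using S.neg_mem (hR b b.2 w)
    | add x y hx hy => rw [map_add, map_add]; exact S.add_mem hx hy
  obtain ⟨z, hz⟩ := hσ
  simpa [leftExtension_tmul, hz, hmul] using key z

theorem IsEquivariantSection.sub_mem_galRel (hσ : IsEquivariantSection ρ σ) (u : P ⊗[k] P) :
    u - leftExtension σ u ∈ galRel k C P ρ := by
  have : ⊤ ≤ (galRel k C P ρ).comap (LinearMap.id - leftExtension σ) := by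
    rw [← TensorProduct.span_tmul_eq_top, Submodule.span_le]
    rintro _ ⟨p, q, rfl⟩
    exact tmul_mem_comap_sub_leftExtension (ρ := ρ) LinearMap.id
      (fun b hb w => Submodule.subset_span ⟨p, w, b, hb, rfl⟩) (hσ.mem_range q)
      (hσ.mul'_apply q)
  simpa using this (Submodule.mem_top (x := u))

theorem IsEquivariantSection.canMap_leftExtension (hσ : IsEquivariantSection ρ σ)
    (u : P ⊗[k] P) : canMap k C P ρ (leftExtension σ u) = canMap k C P ρ u := by
  have h := galRel_le_ker_canMap ρ (hσ.sub_mem_galRel u)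
  rw [mem_ker, map_sub, sub_eq_zero] at h
  exact h.symm

theorem IsEquivariantSection.ker_canMap_le (hσ : IsEquivariantSection ρ σ)
    (hker : ker (canMap k C P ρ) = galRel k C P ρ) :
    ker (canMap k C P ρ) ≤ ker (leftExtension σ) :=
  hker ▸ galRel_le_ker_leftExtension hσ.map_coinv_mul

theorem IsEquivariantSection.leftExtension_leftExtension (hσ : IsEquivariantSection ρ σ)
    (hker : ker (canMap k C P ρ) = galRel k C P ρ) (u : P ⊗[k] P) :
    leftExtension σ (leftExtension σ u) = leftExtension σ u := by
  have h := hσ.ker_canMap_le hker (hker ▸ hσ.sub_mem_galRel u)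
  rw [mem_ker, map_sub, sub_eq_zero] at h
  exact h.symm

end EquivariantSection

section Entwining

variable {k C P : Type} [Field k] [AddCommGroup C] [Module k C] [Ring P] [Algebra k P]
  {ρ : P →ₗ[k] P ⊗[k] C} {ψ : C ⊗[k] P ≃ₗ[k] P ⊗[k] C}

/-- The right `P`-action `(x ⊗ c) · p = x ψ(c ⊗ p)` on `P ⊗ C`, for which `can` is right
`P`-linear. -/
noncomputable def entwinedMulRight (ψ : C ⊗[k] P ≃ₗ[k] P ⊗[k] C) (p : P) :
    P ⊗[k] C →ₗ[k] P ⊗[k] C :=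
  leftExtension (ψ.toLinearMap ∘ₗ (TensorProduct.mk k C P).flip p)

theorem entwinedMulRight_apply (ψ : C ⊗[k] P ≃ₗ[k] P ⊗[k] C) (p : P) (x : P ⊗[k] C) :
    entwinedMulRight ψ p x = rTensor C (mul' k P) ((TensorProduct.assoc k P P C).symm
      (lTensor P ψ.toLinearMap (TensorProduct.assoc k P C P (x ⊗ₜ p)))) := by
  rw [entwinedMulRight, leftExtension, comp_apply, comp_apply, lTensor_comp_apply,
    lTensor_flip_mk_apply]
  rfl

theorem entwinedMulRight_canMap (hent : ∀ q p : P, ρ (q * p) = entwinedMulRight ψ p (ρ q))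
    (p : P) (u : P ⊗[k] P) :
    entwinedMulRight ψ p (canMap k C P ρ u) = canMap k C P ρ (lTensor P (mulRight k p) u) := by
  induction u using TensorProduct.induction_on with
  | zero => simp
  | tmul r q => rw [canMap_tmul, entwinedMulRight, leftExtension_rTensor_mulLeft,
      ← entwinedMulRight, ← hent, lTensor_tmul, mulRight_apply, canMap_tmul]
  | add x y hx hy => simp only [map_add, hx, hy]

/-- For an entwining structure this is an axiom; here it follows from surjectivity of `can`. -/
theorem entwining_tmul_mul (hent : ∀ q p : P, ρ (q * p) = entwinedMulRight ψ p (ρ q))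
    (hsurj : Function.Surjective (canMap k C P ρ)) (c : C) (q p : P) :
    ψ (c ⊗ₜ (q * p)) = entwinedMulRight ψ p (ψ (c ⊗ₜ q)) := by
  obtain ⟨u, hu⟩ := hsurj (1 ⊗ₜ c)
  have key : ∀ q', ψ (c ⊗ₜ q') = canMap k C P ρ (lTensor P (mulRight k q') u) := fun q' => by
    rw [← entwinedMulRight_canMap hent, hu, entwinedMulRight, leftExtension_tmul, mulLeft_one,
      rTensor_id]
    rfl
  rw [key, key, entwinedMulRight_canMap hent, ← lTensor_comp_apply, ← mulRight_mul]

theorem entwining_symm_entwinedMulRight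
    (hent : ∀ q p : P, ρ (q * p) = entwinedMulRight ψ p (ρ q))
    (hsurj : Function.Surjective (canMap k C P ρ)) (p : P) (x : P ⊗[k] C) :
    ψ.symm (entwinedMulRight ψ p x) = lTensor C (mulRight k p) (ψ.symm x) := by
  have h : ψ.toLinearMap ∘ₗ lTensor C (mulRight k p) = entwinedMulRight ψ p ∘ₗ ψ.toLinearMap :=
    TensorProduct.ext' fun c q => entwining_tmul_mul hent hsurj c q p
  rw [LinearEquiv.symm_apply_eq]
  simpa using (LinearMap.congr_fun h (ψ.symm x)).symm

theorem entwining_symm_canMap_tmul (hent : ∀ q p : P, ρ (q * p) = entwinedMulRight ψ p (ρ q))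
    (hsurj : Function.Surjective (canMap k C P ρ)) {e : C} (h1 : ρ 1 = 1 ⊗ₜ e) (p q : P) :
    ψ.symm (canMap k C P ρ (p ⊗ₜ q)) = lTensor C (mulRight k q) (ψ.symm (p ⊗ₜ e)) := by
  have h : canMap k C P ρ (p ⊗ₜ q) = entwinedMulRight ψ q (canMap k C P ρ (p ⊗ₜ 1)) := by
    rw [entwinedMulRight_canMap hent, lTensor_tmul, mulRight_apply, one_mul]
  rw [h, entwining_symm_entwinedMulRight hent hsurj, canMap_tmul, h1, rTensor_tmul,
    mulLeft_apply, mul_one]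

end Entwining

section Coinvariants

variable {k C D P : Type} [Field k] [AddCommGroup C] [Module k C] [AddCommGroup D] [Module k D]
  [Ring P] [Algebra k P] {ρ : P →ₗ[k] P ⊗[k] C} {σ : P →ₗ[k] P ⊗[k] P}
  {ψ : C ⊗[k] P ≃ₗ[k] P ⊗[k] C} {π : C →ₗ[k] D}

theorem mem_Asub_iff {d : D} {a : P} :
    a ∈ Asub k C D P ρ π d ↔ rightCoinvDefect ρ π d a = 0 :=
  Iff.rfl

theorem Xsub_eq_ker [Coalgebra k C] (π : C →ₗ[k] D) (d : D) :
    Xsub k C D π d = ker (rightCoinvDefect (Coalgebra.comul (R := k) (A := C)) π d) :=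
  rfl

noncomputable def leftCoinvDefect (ψ : C ⊗[k] P ≃ₗ[k] P ⊗[k] C) (π : C →ₗ[k] D) (e : C) :
    P →ₗ[k] D ⊗[k] P :=
  rTensor P π ∘ₗ ψ.symm.toLinearMap ∘ₗ (TensorProduct.mk k P C).flip e -
    TensorProduct.mk k D P (π e)

theorem mem_Abar_iff {e : C} {p : P} :
    p ∈ Abar k C D P ψ π e ↔ leftCoinvDefect ψ π e p = 0 := by
  simp [Abar, leftCoinvDefect, sub_eq_zero]

theorem leftCoinvDefect_mul_of_mem_coinv
    (hent : ∀ q p : P, ρ (q * p) = entwinedMulRight ψ p (ρ q))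
    (hsurj : Function.Surjective (canMap k C P ρ)) {e : C} (h1 : ρ 1 = 1 ⊗ₜ e)
    {b : P} (hb : b ∈ coinv k C P ρ) (p : P) :
    leftCoinvDefect ψ π e (p * b) = lTensor D (mulRight k b) (leftCoinvDefect ψ π e p) := by
  have h : (p * b) ⊗ₜ e = canMap k C P ρ (p ⊗ₜ b) := by
    rw [canMap_tmul, coaction_eq_tmul_of_mem_coinv h1 hb, rTensor_tmul, mulLeft_apply]
  simp only [leftCoinvDefect, LinearMap.sub_apply, LinearMap.comp_apply, flip_apply,
    TensorProduct.mk_apply, LinearEquiv.coe_coe, map_sub, lTensor_tmul, mulRight_apply]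
  rw [h, entwining_symm_canMap_tmul hent hsurj h1, lTensor_rTensor_comm_apply]

theorem rTensor_coaction_rightCoinvDefect [Coalgebra k C]
    (hρcoassoc : ∀ p : P,
      TensorProduct.assoc k P C C (LinearMap.rTensor C ρ (ρ p)) =
        LinearMap.lTensor P (Coalgebra.comul (R := k) (A := C)) (ρ p))
    (π : C →ₗ[k] D) (d : D) (p : P) :
    rTensor D ρ (rightCoinvDefect ρ π d p) = (TensorProduct.assoc k P C D).symm
      (lTensor P (rightCoinvDefect (Coalgebra.comul (R := k) (A := C)) π d) (ρ p)) :=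
  rTensor_rightCoinvDefect (fun p => (LinearEquiv.eq_symm_apply _).mpr (hρcoassoc p)) π d p

theorem IsEquivariantSection.rTensor_rightCoinvDefect (hσ : IsEquivariantSection ρ σ)
    (π : C →ₗ[k] D) (d : D) (p : P) :
    rTensor D σ (rightCoinvDefect ρ π d p) =
      (TensorProduct.assoc k P P D).symm (lTensor P (rightCoinvDefect ρ π d) (σ p)) :=
  _root_.rTensor_rightCoinvDefect hσ.rTensor_coaction π d p

theorem IsEquivariantSection.mem_range_mapIncl (hσ : IsEquivariantSection ρ σ)
    {d : D} {a : P} (ha : a ∈ Asub k C D P ρ π d) :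
    σ a ∈ range (TensorProduct.mapIncl (coinvSubmodule ρ) (Asub k C D P ρ π d)) := by
  refine mem_range_mapIncl_of_lTensor_eq_zero (hσ.mem_range a) ?_
  have h := hσ.rTensor_rightCoinvDefect π d a
  rwa [mem_Asub_iff.mp ha, map_zero, eq_comm, LinearEquiv.map_eq_zero_iff] at h

theorem ΛMap_sub_mk_canMap [Coalgebra k C]
    (hρcoassoc : ∀ p : P,
      TensorProduct.assoc k P C C (LinearMap.rTensor C ρ (ρ p)) =
        LinearMap.lTensor P (Coalgebra.comul (R := k) (A := C)) (ρ p))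
    (hent : ∀ q p : P, ρ (q * p) = entwinedMulRight ψ p (ρ q))
    (hsurj : Function.Surjective (canMap k C P ρ)) {e : C} (h1 : ρ 1 = 1 ⊗ₜ e)
    (u : P ⊗[k] P) :
    (ΛMap k C D P ψ π - TensorProduct.mk k D (P ⊗[k] C) (π e)) (canMap k C P ρ u) =
      lTensor D (canMap k C P ρ)
        (TensorProduct.assoc k D P P (rTensor P (leftCoinvDefect ψ π e) u)) := by
  induction u using TensorProduct.induction_on with
  | zero => simp
  | tmul p q =>
    have h : rTensor P π ∘ₗ ψ.symm.toLinearMap ∘ₗ rTensor C (mulLeft k p) ∘ₗ ρ =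
        tensorMulRight (rTensor P π (ψ.symm (p ⊗ₜ e))) := by
      ext q'
      simp only [LinearMap.comp_apply, LinearEquiv.coe_coe, ← canMap_tmul,
        entwining_symm_canMap_tmul hent hsurj h1, lTensor_rTensor_comm_apply,
        tensorMulRight_apply]
    have hΛ : ΛMap k C D P ψ π (canMap k C P ρ (p ⊗ₜ q)) = TensorProduct.assoc k D P C
        (rTensor C (tensorMulRight (rTensor P π (ψ.symm (p ⊗ₜ e)))) (ρ q)) := by
      simp only [ΛMap, LinearMap.comp_apply, LinearEquiv.coe_coe, canMap_tmul]
      rw [lTensor_rTensor_comm_apply, ← hρcoassoc, rTensor_tensor_assoc_apply,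
        LinearEquiv.symm_apply_apply, ← h]
      simp only [rTensor_comp_apply]
    rw [LinearMap.sub_apply, hΛ, canMap_eq_leftExtension, ← lTensor_leftExtension_assoc_tmul]
    simp only [leftCoinvDefect, rTensor_tmul, LinearMap.sub_apply, LinearMap.comp_apply,
      LinearEquiv.coe_coe, flip_apply, TensorProduct.mk_apply, TensorProduct.sub_tmul, map_sub,
      TensorProduct.assoc_tmul, lTensor_tmul]
  | add x y hx hy => simp only [map_add, hx, hy]

theorem galRelAbarA_le_galRel {e : C} : galRelAbarA k C D P ρ ψ π e ≤ galRel k C P ρ :=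
  Submodule.span_mono <| by
    rintro _ ⟨p, -, b, hb, a, -, rfl⟩
    exact ⟨p, a, b, hb, rfl⟩

end Coinvariants

section Restriction

variable {k C D P : Type} [Field k] [AddCommGroup C] [Module k C] [AddCommGroup D] [Module k D]
  [Ring P] [Algebra k P] {ρ : P →ₗ[k] P ⊗[k] C} {σ : P →ₗ[k] P ⊗[k] P}
  {ψ : C ⊗[k] P ≃ₗ[k] P ⊗[k] C} {π : C →ₗ[k] D} {e : C}

theorem canMap_tmul_mem_range_inf_ker [Coalgebra k C]
    (hρcoassoc : ∀ p : P,
      TensorProduct.assoc k P C C (LinearMap.rTensor C ρ (ρ p)) =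
        LinearMap.lTensor P (Coalgebra.comul (R := k) (A := C)) (ρ p))
    (hent : ∀ q p : P, ρ (q * p) = entwinedMulRight ψ p (ρ q))
    (hsurj : Function.Surjective (canMap k C P ρ)) (h1 : ρ 1 = 1 ⊗ₜ e)
    {p a : P} (hp : p ∈ Abar k C D P ψ π e) (ha : a ∈ Asub k C D P ρ π (π e)) :
    canMap k C P ρ (p ⊗ₜ a) ∈ range (lTensor P (Xsub k C D π (π e)).subtype) ⊓
      ker (ΛMap k C D P ψ π - TensorProduct.mk k D (P ⊗[k] C) (π e)) := by
  refine ⟨?_, ?_⟩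
  · have hρa : ρ a ∈
        ker (lTensor P (rightCoinvDefect (Coalgebra.comul (R := k) (A := C)) π (π e))) := by
      have h := rTensor_coaction_rightCoinvDefect hρcoassoc π (π e) a
      rwa [mem_Asub_iff.mp ha, map_zero, eq_comm, LinearEquiv.map_eq_zero_iff] at h
    rw [ker_lTensor_eq_range_lTensor_subtype, ← Xsub_eq_ker] at hρa
    obtain ⟨y, hy⟩ := hρa
    exact ⟨rTensor _ (mulLeft k p) y, by rw [lTensor_rTensor_comm_apply, hy, canMap_tmul]⟩
  · rw [SetLike.mem_coe, mem_ker, ΛMap_sub_mk_canMap hρcoassoc hent hsurj h1, rTensor_tmul,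
      mem_Abar_iff.mp hp, TensorProduct.zero_tmul, map_zero, map_zero]

theorem lTensor_rightCoinvDefect_leftExtension [Coalgebra k C]
    (hρcoassoc : ∀ p : P,
      TensorProduct.assoc k P C C (LinearMap.rTensor C ρ (ρ p)) =
        LinearMap.lTensor P (Coalgebra.comul (R := k) (A := C)) (ρ p))
    (hker : ker (canMap k C P ρ) = galRel k C P ρ) (hσ : IsEquivariantSection ρ σ) {d : D}
    {u : P ⊗[k] P} (hu : canMap k C P ρ u ∈ range (lTensor P (Xsub k C D π d).subtype)) :
    lTensor P (rightCoinvDefect ρ π d) (leftExtension σ u) = 0 := by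
  obtain ⟨y, hy⟩ := hu
  have hX : lTensor P (rightCoinvDefect (Coalgebra.comul (R := k) (A := C)) π d)
      (canMap k C P ρ u) = 0 := by
    have h : rightCoinvDefect (Coalgebra.comul (R := k) (A := C)) π d ∘ₗ
        (Xsub k C D π d).subtype = 0 := comp_ker_subtype _
    rw [← hy, ← lTensor_comp_apply, h, lTensor_zero, LinearMap.zero_apply]
  rw [canMap_eq_leftExtension, lTensor_leftExtension_apply ρ _ _
    (rTensor_coaction_rightCoinvDefect hρcoassoc π d), LinearEquiv.map_eq_zero_iff] at hX
  rw [lTensor_leftExtension_apply σ _ _ (hσ.rTensor_rightCoinvDefect π d),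
    LinearEquiv.map_eq_zero_iff]
  exact ker_rTensor_mono (hσ.ker_canMap_le hker) hX

theorem rTensor_leftCoinvDefect_eq_zero [Coalgebra k C]
    (hρcoassoc : ∀ p : P,
      TensorProduct.assoc k P C C (LinearMap.rTensor C ρ (ρ p)) =
        LinearMap.lTensor P (Coalgebra.comul (R := k) (A := C)) (ρ p))
    (hent : ∀ q p : P, ρ (q * p) = entwinedMulRight ψ p (ρ q))
    (hsurj : Function.Surjective (canMap k C P ρ))
    (hker : ker (canMap k C P ρ) = galRel k C P ρ) (h1 : ρ 1 = 1 ⊗ₜ e)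
    (hσ : IsEquivariantSection ρ σ) {u : P ⊗[k] P} (hEu : leftExtension σ u = u)
    (hu : canMap k C P ρ u ∈ ker (ΛMap k C D P ψ π - TensorProduct.mk k D (P ⊗[k] C) (π e))) :
    rTensor P (leftCoinvDefect ψ π e) u = 0 := by
  rw [mem_ker, ΛMap_sub_mk_canMap hρcoassoc hent hsurj h1] at hu
  have hE := ker_lTensor_mono (hσ.ker_canMap_le hker) hu
  rwa [mem_ker, ← assoc_rTensor_leftExtension _ σ
    (fun b hb => leftCoinvDefect_mul_of_mem_coinv hent hsurj h1 hb) hσ.mem_range, hEu,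
    LinearEquiv.map_eq_zero_iff] at hE

theorem mem_map_canMap_of_mem_range_inf_ker [Coalgebra k C]
    (hρcoassoc : ∀ p : P,
      TensorProduct.assoc k P C C (LinearMap.rTensor C ρ (ρ p)) =
        LinearMap.lTensor P (Coalgebra.comul (R := k) (A := C)) (ρ p))
    (hent : ∀ q p : P, ρ (q * p) = entwinedMulRight ψ p (ρ q))
    (hsurj : Function.Surjective (canMap k C P ρ))
    (hker : ker (canMap k C P ρ) = galRel k C P ρ) (h1 : ρ 1 = 1 ⊗ₜ e)
    (hσ : IsEquivariantSection ρ σ) {w : P ⊗[k] C}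
    (hw : w ∈ range (lTensor P (Xsub k C D π (π e)).subtype) ⊓
      ker (ΛMap k C D P ψ π - TensorProduct.mk k D (P ⊗[k] C) (π e))) :
    w ∈ (Submodule.span k {w : P ⊗[k] P | ∃ p ∈ Abar k C D P ψ π e,
      ∃ a ∈ Asub k C D P ρ π (π e), w = p ⊗ₜ[k] a}).map (canMap k C P ρ) := by
  obtain ⟨hwX, hwΛ⟩ := hw
  obtain ⟨u, rfl⟩ := hsurj w
  have hcan := hσ.canMap_leftExtension u
  have hu_A := lTensor_rightCoinvDefect_leftExtension hρcoassoc hker hσ hwX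
  have hu_Abar := rTensor_leftCoinvDefect_eq_zero hρcoassoc hent hsurj hker h1 hσ
    (hσ.leftExtension_leftExtension hker u) (hcan ▸ hwΛ)
  have hu := mem_range_mapIncl_of_lTensor_eq_zero (U := ker (leftCoinvDefect ψ π e))
    (by rwa [← ker_rTensor_eq_range_rTensor_subtype]) hu_A
  rw [TensorProduct.range_mapIncl] at hu
  refine ⟨_, Submodule.map₂_le.mpr (fun p hp a ha => ?_) hu, hcan⟩
  exact Submodule.subset_span ⟨p, mem_Abar_iff.mpr hp, a, ha, rfl⟩

theorem canMap_eq_zero_iff_mem_galRelAbarA (hker : ker (canMap k C P ρ) = galRel k C P ρ)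
    (hσ : IsEquivariantSection ρ σ) {w : P ⊗[k] P}
    (hw : w ∈ Submodule.span k {w : P ⊗[k] P | ∃ p ∈ Abar k C D P ψ π e,
      ∃ a ∈ Asub k C D P ρ π (π e), w = p ⊗ₜ[k] a}) :
    canMap k C P ρ w = 0 ↔ w ∈ galRelAbarA k C D P ρ ψ π e := by
  refine ⟨fun h0 => ?_, fun hG => by rw [← mem_ker, hker]; exact galRelAbarA_le_galRel hG⟩
  have hE : leftExtension σ w = 0 := hσ.ker_canMap_le hker h0
  have hspan : Submodule.span k {w : P ⊗[k] P | ∃ p ∈ Abar k C D P ψ π e,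
      ∃ a ∈ Asub k C D P ρ π (π e), w = p ⊗ₜ[k] a} ≤
      (galRelAbarA k C D P ρ ψ π e).comap (LinearMap.id - leftExtension σ) := by
    rw [Submodule.span_le]
    rintro _ ⟨p, hp, a, ha, rfl⟩
    exact tmul_mem_comap_sub_leftExtension (ρ := ρ) (Asub k C D P ρ π (π e)).subtype
      (fun b hb a' => Submodule.subset_span ⟨p, hp, b, hb, a', a'.2, rfl⟩)
      (hσ.mem_range_mapIncl ha) (hσ.mul'_apply a)
  simpa [hE] using hspan hw

end Restriction

theorem stmt10
    (ρ : P →ₗ[k] P ⊗[k] C)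
    (hρcoassoc : ∀ p : P,
      TensorProduct.assoc k P C C (LinearMap.rTensor C ρ (ρ p)) =
        LinearMap.lTensor P (Coalgebra.comul (R := k) (A := C)) (ρ p))
    (e : C)
    (h1 : ρ 1 = 1 ⊗ₜ[k] e)
    (hsurj : Function.Surjective (canMap k C P ρ))
    (hker : LinearMap.ker (canMap k C P ρ) = galRel k C P ρ)
    (ψ : C ⊗[k] P ≃ₗ[k] P ⊗[k] C)
    (hent : ∀ q p : P,
      ρ (q * p) =
        LinearMap.rTensor C (LinearMap.mul' k P)
          ((TensorProduct.assoc k P P C).symm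
            (LinearMap.lTensor P ψ.toLinearMap
              (TensorProduct.assoc k P C P ((ρ q) ⊗ₜ[k] p)))))
    (hproj : ∃ σ : P →ₗ[k] P ⊗[k] P,
      (∀ p : P, LinearMap.mul' k P (σ p) = p) ∧
      (∀ p : P, σ p ∈
        Submodule.span k {w : P ⊗[k] P | ∃ b ∈ coinv k C P ρ, ∃ q : P, w = b ⊗ₜ[k] q}) ∧
      (∀ b ∈ coinv k C P ρ, ∀ p : P,
        σ (b * p) = LinearMap.rTensor P (LinearMap.mulLeft k b) (σ p)) ∧
      (∀ p : P,
        LinearMap.rTensor C σ (ρ p) =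
          (TensorProduct.assoc k P P C).symm (LinearMap.lTensor P ρ (σ p))))
    (π : C →ₗ[k] D) :
    Submodule.map (canMap k C P ρ)
        (Submodule.span k {w : P ⊗[k] P | ∃ p ∈ Abar k C D P ψ π e,
          ∃ a ∈ Asub k C D P ρ π (π e), w = p ⊗ₜ[k] a}) =
      LinearMap.range (LinearMap.lTensor P (Xsub k C D π (π e)).subtype) ⊓
        LinearMap.ker (ΛMap k C D P ψ π - TensorProduct.mk k D (P ⊗[k] C) (π e)) ∧
    (∀ w ∈ Submodule.span k {w : P ⊗[k] P | ∃ p ∈ Abar k C D P ψ π e,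
          ∃ a ∈ Asub k C D P ρ π (π e), w = p ⊗ₜ[k] a},
      (canMap k C P ρ w = 0 ↔ w ∈ galRelAbarA k C D P ρ ψ π e)) := by
  obtain ⟨σ, hσ₁, hσ₂, hσ₃, hσ₄⟩ := hproj
  have hσ : IsEquivariantSection ρ σ := ⟨hσ₁, hσ₂, hσ₃, hσ₄⟩
  have hent' : ∀ q p : P, ρ (q * p) = entwinedMulRight ψ p (ρ q) := fun q p => by
    rw [hent, entwinedMulRight_apply]
  refine ⟨le_antisymm ?_ fun w hw =>
      mem_map_canMap_of_mem_range_inf_ker hρcoassoc hent' hsurj hker h1 hσ hw,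
    fun w hw => canMap_eq_zero_iff_mem_galRelAbarA hker hσ hw⟩
  rw [Submodule.map_span_le]
  rintro _ ⟨p, hp, a, ha, rfl⟩
  exact canMap_tmul_mem_range_inf_ker hρcoassoc hent' hsurj h1 hp ha
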